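/- arXiv:1203.1347 — 7 statements merged into one kernel-verified Lean document; each statement's English description precedes it below -/
import Mathlib

section
/- For every type σ and every σ-structure A, the set of σ₂-words w such that the caterpillar β*(P_w) described by w admits a homomorphism to A is a regular language over the alphabet σ₂. -/
/-! Basic framework: relational structures of a finite type `σ` with arities `ar`,
homomorphisms, the binary type/alphabet `σ₂`, the functors `β` and `β*`,
path structures `P_w`, nondeterministic acceptance, and caterpillar notions. -/

/-- A `σ`-structure: a finite universe together with an `ar R`-ary relation for each `R ∈ σ`. -/
structure Str (σ : Type) (ar : σ → ℕ) : Type 1 where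
  V : Type
  finiteV : Finite V
  rel : ∀ R : σ, Set ((Fin (ar R)) → V)

/-- The alphabet (and binary type) `σ₂`: a symbol `R^(i,j)` for each `R ∈ σ` of arity `k`
and each `(i,j) ∈ {1,…,k}²`. -/
abbrev Sig2 (σ : Type) (ar : σ → ℕ) : Type := Σ R : σ, Fin (ar R) × Fin (ar R)

/-- A `σ₂`-structure: a finite universe with a binary relation for each symbol of `σ₂`. -/
structure Str2 (σ : Type) (ar : σ → ℕ) : Type 1 where
  V : Type
  finiteV : Finite V
  rel : Sig2 σ ar → Set (V × V)

variable {σ : Type} [Finite σ] {ar : σ → ℕ}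

/-- Existence of a homomorphism between `σ`-structures. -/
def Str.Hom (A B : Str σ ar) : Prop :=
  ∃ f : A.V → B.V, ∀ (R : σ) (t : Fin (ar R) → A.V), t ∈ A.rel R → (fun i => f (t i)) ∈ B.rel R

/-- Existence of a homomorphism between `σ₂`-structures. -/
def Str2.Hom (X Y : Str2 σ ar) : Prop :=
  ∃ f : X.V → Y.V, ∀ (s : Sig2 σ ar) (p : X.V × X.V), p ∈ X.rel s → (f p.1, f p.2) ∈ Y.rel s

/-- Isomorphism of `σ`-structures. -/
def Str.Iso (A B : Str σ ar) : Prop :=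
  ∃ f : A.V ≃ B.V, ∀ (R : σ) (t : Fin (ar R) → A.V), t ∈ A.rel R ↔ (fun i => f (t i)) ∈ B.rel R

/-- The functor `β`: same universe, `(x_i, x_j) ∈ R^(i,j)(β B)` for each `(x_1,…,x_k) ∈ R(B)`. -/
def strBeta (B : Str σ ar) : Str2 σ ar where
  V := B.V
  finiteV := B.finiteV
  rel := fun s => { p | ∃ t ∈ B.rel s.1, t s.2.1 = p.1 ∧ t s.2.2 = p.2 }

/-- The carrier of `β*(X)⁺`: a copy of each element of `X` together with fresh elements
`x_1, …, x_k` for each `(x,y) ∈ R^(i,j)(X)`. -/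
abbrev PlusCarrier (X : Str2 σ ar) : Type :=
  X.V ⊕ Σ s : Sig2 σ ar, { p : X.V × X.V // p ∈ X.rel s } × Fin (ar s.1)

/-- The identifications generating `∼`: for `(x,y) ∈ R^(i,j)(X)`, identify `x_i` with `x`
and `x_j` with `y`. -/
inductive PreRel (X : Str2 σ ar) : PlusCarrier X → PlusCarrier X → Prop
  | left (s : Sig2 σ ar) (p : { p : X.V × X.V // p ∈ X.rel s }) :
      PreRel X (Sum.inr ⟨s, p, s.2.1⟩) (Sum.inl p.1.1)
  | right (s : Sig2 σ ar) (p : { p : X.V × X.V // p ∈ X.rel s }) :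
      PreRel X (Sum.inr ⟨s, p, s.2.2⟩) (Sum.inl p.1.2)

/-- The functor `β*`, left adjoint to `β`. -/
def strBetaStar (X : Str2 σ ar) : Str σ ar where
  V := Quot (PreRel X)
  finiteV := by
    have : Finite X.V := X.finiteV
    exact Finite.of_surjective (Quot.mk (PreRel X)) (fun q => Quot.exists_rep q)
  rel := fun R => { t | ∃ (i j : Fin (ar R)) (p : X.V × X.V) (hp : p ∈ X.rel ⟨R, (i, j)⟩),
      t = fun m => Quot.mk (PreRel X) (Sum.inr ⟨⟨R, (i, j)⟩, ⟨p, hp⟩, m⟩) }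

/-- The `σ₂`-path `P_w` of a word `w ∈ σ₂*`. -/
def PathStr (w : List (Sig2 σ ar)) : Str2 σ ar where
  V := Fin (w.length + 1)
  finiteV := inferInstance
  rel := fun s => { p | ∃ t : Fin w.length, w.get t = s ∧ p = (t.castSucc, t.succ) }

/-- Acceptance of the word `w` by the `σ₂`-structure `X` viewed as a nondeterministic
automaton with initial states `I` and terminal states `T`. -/
def NAccepts (X : Str2 σ ar) (I T : Set X.V) (w : List (Sig2 σ ar)) : Prop :=
  ∃ f : Fin (w.length + 1) → X.V,
    (∀ (s : Sig2 σ ar) (p : Fin (w.length + 1) × Fin (w.length + 1)),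
        p ∈ (PathStr w).rel s → (f p.1, f p.2) ∈ X.rel s) ∧
    f 0 ∈ I ∧ f (Fin.last w.length) ∈ T

/-! Caterpillars. -/

/-- The blocks (hyperedges) of a `σ`-structure. -/
def Str.Block (A : Str σ ar) : Type := Σ R : σ, { t : Fin (ar R) → A.V // t ∈ A.rel R }

/-- The underlying simple graph of the incidence multigraph `Inc(A)`. -/
def IncGraph (A : Str σ ar) : SimpleGraph (A.V ⊕ A.Block) :=
  SimpleGraph.fromRel (fun u v =>
    ∃ (b : A.Block) (i : Fin (ar b.1)), u = Sum.inl (b.2.1 i) ∧ v = Sum.inr b)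

/-- `a` is a leaf when it has degree one in `Inc(A)`, i.e. there is exactly one
incidence `(block, coordinate)` at `a`. -/
def Str.IsLeaf (A : Str σ ar) (a : A.V) : Prop :=
  Nat.card { e : Σ b : A.Block, Fin (ar b.1) // e.1.2.1 e.2 = a } = 1

/-- A block is pendant when it is incident to at most one non-leaf. -/
def Str.IsPendant (A : Str σ ar) (b : A.Block) : Prop :=
  Set.Subsingleton { a : A.V | ¬ A.IsLeaf a ∧ ∃ i, b.2.1 i = a }

/-- A `σ`-tree: the incidence multigraph is connected, has no cycles and no parallel edges. -/
def Str.IsTreeStr (A : Str σ ar) : Prop :=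
  (∀ b : A.Block, Function.Injective b.2.1) ∧ (IncGraph A).IsTree

/-- A `σ`-path: a `σ`-tree with at most two pendant blocks. -/
def Str.IsPathStr (A : Str σ ar) : Prop :=
  A.IsTreeStr ∧ Nat.card { b : A.Block // A.IsPendant b } ≤ 2

/-- The vertices removed when pruning: leaves attached to pendant blocks only. -/
def Str.Removed (A : Str σ ar) (a : A.V) : Prop :=
  A.IsLeaf a ∧ ∀ b : A.Block, (∃ i, b.2.1 i = a) → A.IsPendant b

/-- The structure obtained by removing all pendant blocks and the leaves attached to them. -/
def prune (A : Str σ ar) : Str σ ar where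
  V := { a : A.V // ¬ A.Removed a }
  finiteV := by have : Finite A.V := A.finiteV; exact inferInstance
  rel := fun R => { t | ∃ (t₀ : Fin (ar R) → A.V) (h₀ : t₀ ∈ A.rel R),
      ¬ A.IsPendant ⟨R, t₀, h₀⟩ ∧ ∀ i, (t i : A.V) = t₀ i }

/-- A `σ`-caterpillar: a `σ`-tree which is a path or becomes one after removing all
pendant blocks and the leaves attached to them. -/
def Str.IsCaterpillar (A : Str σ ar) : Prop :=
  A.IsTreeStr ∧ (A.IsPathStr ∨ (prune A).IsPathStr)

/-! Dualities. -/

/-- `(O, A)` is a homomorphism duality. -/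
def IsDuality (O : Set (Str σ ar)) (A : Str σ ar) : Prop :=
  ∀ B : Str σ ar, B.Hom A ↔ ∀ T ∈ O, ¬ T.Hom B

/-- `A` has caterpillar duality. -/
def HasCatDuality (A : Str σ ar) : Prop :=
  ∃ O : Set (Str σ ar), (∀ T ∈ O, T.IsCaterpillar) ∧ IsDuality O A

/-- `A` has path duality. -/
def HasPathDuality (A : Str σ ar) : Prop :=
  ∃ O : Set (Str σ ar), (∀ T ∈ O, T.IsPathStr) ∧ IsDuality O A

/-! The construction `Γ` on a deterministic automaton. -/

/-- The structure `Γ(D, {q₀}, T)`: universe is the set of subsets of `V(D)` containing `q₀`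
and disjoint from `T`; `(X_1,…,X_k) ∈ R(Γ D)` iff for all `(i,j)` and all `a ∈ X_i`,
every `b` with `(a,b) ∈ R^(i,j)(D)` lies in `X_j`. -/
def GammaStr (D : Str2 σ ar) (q0 : D.V) (T : Set D.V) : Str σ ar where
  V := { X : Set D.V // q0 ∈ X ∧ ∀ x ∈ X, x ∉ T }
  finiteV := by have : Finite D.V := D.finiteV; exact inferInstance
  rel := fun R => { t | ∀ (i j : Fin (ar R)) (a : D.V), a ∈ (t i).1 →
      ∀ b : D.V, (a, b) ∈ D.rel ⟨R, (i, j)⟩ → b ∈ (t j).1 }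

theorem test : True := trivial

/-- Characterization of membership in `NFA.evalFrom` via runs. -/
lemma nfa_evalFrom_iff {K Q : Type} (M : NFA K Q) (w : List K) (S : Set Q) (a : Q) :
    a ∈ M.evalFrom S w ↔ ∃ f : ℕ → Q, f 0 ∈ S ∧ f w.length = a ∧
      ∀ t (h : t < w.length), f (t + 1) ∈ M.step (f t) w[t] := by
  induction w generalizing S with
  | nil =>
    simp only [NFA.evalFrom_nil, List.length_nil]
    constructor
    · intro ha
      exact ⟨fun _ => a, ha, rfl, fun t ht => absurd ht (Nat.not_lt_zero t)⟩
    · rintro ⟨f, h0, hl, _⟩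
      rwa [hl] at h0
  | cons s w ih =>
    have : M.evalFrom S (s :: w) = M.evalFrom (M.stepSet S s) w := rfl
    rw [this, ih]
    constructor
    · rintro ⟨f, h0, hl, hrun⟩
      rw [NFA.mem_stepSet] at h0
      obtain ⟨q, hq, hstep⟩ := h0
      refine ⟨fun n => match n with | 0 => q | n + 1 => f n, hq, hl, ?_⟩
      intro t ht
      match t with
      | 0 => exact hstep
      | t + 1 =>
        have ht' : t < w.length := Nat.lt_of_succ_lt_succ ht
        simpa using hrun t ht'
    · rintro ⟨g, h0, hl, hrun⟩
      refine ⟨fun n => g (n + 1), ?_, hl, ?_⟩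
      · rw [NFA.mem_stepSet]
        exact ⟨g 0, h0, hrun 0 (Nat.succ_pos _)⟩
      · intro t ht
        have := hrun (t + 1) (Nat.succ_lt_succ ht)
        simpa using this

/-- The adjunction: `β*(P_w)` maps homomorphically into `A` iff there is a run of the
word `w` in `β(A)`. -/
lemma homBetaStar_iff {σ : Type} [Finite σ] {ar : σ → ℕ} (A : Str σ ar)
    (w : List (Sig2 σ ar)) :
    (strBetaStar (PathStr w)).Hom A ↔ ∃ f : ℕ → A.V,
      ∀ t (h : t < w.length), (f t, f (t + 1)) ∈ (strBeta A).rel w[t] := by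
  set X := PathStr w with hX
  constructor
  · rintro ⟨g, hg⟩
    refine ⟨fun n => g (Quot.mk _ (Sum.inl (⟨n % (w.length + 1),
      Nat.mod_lt n (Nat.succ_pos _)⟩ : Fin (w.length + 1)))), ?_⟩
    intro t ht
    -- the edge of the path
    have hp : ((⟨t, ht⟩ : Fin w.length).castSucc, (⟨t, ht⟩ : Fin w.length).succ)
        ∈ X.rel w[t] := ⟨⟨t, ht⟩, by simp [List.get_eq_getElem], rfl⟩
    set s : Sig2 σ ar := w[t] with hs
    -- the hyperedge of `β*(P_w)`
    have hedge : (fun m => Quot.mk (PreRel X) (Sum.inr ⟨⟨s.1, (s.2.1, s.2.2)⟩,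
        ⟨((⟨t, ht⟩ : Fin w.length).castSucc, (⟨t, ht⟩ : Fin w.length).succ), hp⟩, m⟩))
        ∈ (strBetaStar X).rel s.1 :=
      ⟨s.2.1, s.2.2, _, hp, rfl⟩
    have htuple := hg s.1 _ hedge
    refine ⟨fun m => g (Quot.mk (PreRel X) (Sum.inr ⟨⟨s.1, (s.2.1, s.2.2)⟩,
        ⟨(_, _), hp⟩, m⟩)), htuple, ?_, ?_⟩
    · have := Quot.sound (PreRel.left (X := X) ⟨s.1, (s.2.1, s.2.2)⟩
        ⟨((⟨t, ht⟩ : Fin w.length).castSucc, (⟨t, ht⟩ : Fin w.length).succ), hp⟩)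
      beta_reduce
      rw [this]
      congr 2
      exact congrArg Sum.inl (Fin.ext (by simp [Nat.mod_eq_of_lt (Nat.lt_succ_of_lt ht)]))
    · have := Quot.sound (PreRel.right (X := X) ⟨s.1, (s.2.1, s.2.2)⟩
        ⟨((⟨t, ht⟩ : Fin w.length).castSucc, (⟨t, ht⟩ : Fin w.length).succ), hp⟩)
      beta_reduce
      rw [this]
      congr 2
      exact congrArg Sum.inl (Fin.ext (by simp [Nat.mod_eq_of_lt (Nat.succ_lt_succ ht)]))
  · rintro ⟨f, hf⟩
    -- choose witness tuples for each edge
    have hT : ∀ (s : Sig2 σ ar) (q : { p : X.V × X.V // p ∈ X.rel s }),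
        ∃ tup : Fin (ar s.1) → A.V, tup ∈ A.rel s.1 ∧
          tup s.2.1 = f (q.1.1 : Fin (w.length + 1)).val ∧
          tup s.2.2 = f (q.1.2 : Fin (w.length + 1)).val := by
      rintro s ⟨p, hp⟩
      obtain ⟨t, hts, hpe⟩ := hp
      obtain ⟨tup, h1, h2, h3⟩ := hf t.val t.isLt
      subst hpe
      have hgs : w[t.val] = s := by simpa [List.get_eq_getElem] using hts
      subst hgs
      exact ⟨tup, h1, by simpa using h2, by simpa using h3⟩
    choose T hT1 hT2 hT3 using hT
    -- define the map on the plus carrier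
    let g0 : PlusCarrier X → A.V := fun x =>
      match x with
      | Sum.inl v => f v.val
      | Sum.inr ⟨s, q, m⟩ => T s q m
    have hresp : ∀ x y, PreRel X x y → g0 x = g0 y := by
      rintro x y (⟨s, q⟩ | ⟨s, q⟩)
      · exact hT2 s q
      · exact hT3 s q
    refine ⟨Quot.lift g0 hresp, ?_⟩
    rintro R tup ⟨i, j, p, hp, rfl⟩
    exact hT1 ⟨R, (i, j)⟩ ⟨p, hp⟩

/-- the set of `σ₂`-words describing caterpillars admitting a homomorphism
to `A` is a regular language. -/
theorem stmt_0 (σ : Type) [Finite σ] (ar : σ → ℕ) (A : Str σ ar) :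
    Language.IsRegular { w : List (Sig2 σ ar) | (strBetaStar (PathStr w)).Hom A } := by
  classical
  have : Finite A.V := A.finiteV
  -- the NFA with states `A.V`, all states initial and accepting
  let M : NFA (Sig2 σ ar) A.V :=
    { step := fun a s => { b | (a, b) ∈ (strBeta A).rel s }
      start := Set.univ
      accept := Set.univ }
  letI : Fintype (Set A.V) := Fintype.ofFinite _
  refine ⟨Set A.V, inferInstance, M.toDFA, ?_⟩
  rw [NFA.toDFA_correct]
  ext w
  rw [NFA.mem_accepts]
  simp only [Set.mem_setOf_eq, homBetaStar_iff]
  constructor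
  · rintro ⟨a, -, ha⟩
    rw [nfa_evalFrom_iff] at ha
    obtain ⟨f, -, -, hrun⟩ := ha
    exact ⟨f, hrun⟩
  · rintro ⟨f, hf⟩
    refine ⟨f w.length, Set.mem_univ _, ?_⟩
    rw [nfa_evalFrom_iff]
    exact ⟨f, Set.mem_univ _, rfl, hf⟩
end

section
/- For every type σ and every σ-structure A, the set of σ₂-words w such that the caterpillar β*(P_w) described by w does NOT admit a homomorphism to A is a regular language over the alphabet σ₂. -/
variable {σ : Type} [Finite σ] {ar : σ → ℕ}

/-- One-step relation of the natural automaton associated to `A`. -/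
def nstep (A : Str σ ar) (a : A.V) (s : Sig2 σ ar) : Set A.V :=
  { b | ∃ u ∈ A.rel s.1, u s.2.1 = a ∧ u s.2.2 = b }

/-- A run of the automaton on `w`. -/
def HasRun (A : Str σ ar) (S : Set A.V) (w : List (Sig2 σ ar)) (b : A.V) : Prop :=
  ∃ a : Fin (w.length + 1) → A.V, a 0 ∈ S ∧ a (Fin.last _) = b ∧
    ∀ t : Fin w.length, a t.succ ∈ nstep A (a t.castSucc) (w.get t)

/-- The subset-construction DFA associated to `A`. -/
def dfaOf (A : Str σ ar) : DFA (Sig2 σ ar) (Set A.V) where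
  step := fun S s => ⋃ a ∈ S, nstep A a s
  start := Set.univ
  accept := { S | S = ∅ }

lemma evalFrom_eq_run (A : Str σ ar) (w : List (Sig2 σ ar)) (S : Set A.V) :
    (dfaOf A).evalFrom S w = { b | HasRun A S w b } := by
  induction w generalizing S with
  | nil =>
    ext b
    simp only [DFA.evalFrom_nil, HasRun, Set.mem_setOf_eq]
    constructor
    · intro hb
      exact ⟨fun _ => b, hb, rfl, fun t => absurd t.2 (by simp)⟩
    · rintro ⟨a, h0, hl, -⟩
      exact hl ▸ h0
  | cons s w ih =>
    have hstep : ∀ S, (dfaOf A).evalFrom S (s :: w)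
        = (dfaOf A).evalFrom ((dfaOf A).step S s) w := fun _ => rfl
    ext b
    rw [hstep, ih]
    simp only [Set.mem_setOf_eq, HasRun]
    constructor
    · rintro ⟨a, h0, hl, hrun⟩
      obtain ⟨c, hc, hcs⟩ : ∃ c ∈ S, a 0 ∈ nstep A c s := by
        have h0' : a 0 ∈ ⋃ c ∈ S, nstep A c s := h0
        simpa using h0'
      refine ⟨Fin.cases c a, ?_, ?_, ?_⟩
      · exact hc
      · exact hl
      · intro t
        induction t using Fin.cases with
        | zero => exact hcs
        | succ r => exact hrun r
    · rintro ⟨a, h0, hl, hrun⟩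
      refine ⟨fun t => a t.succ, ?_, ?_, ?_⟩
      · exact Set.mem_biUnion h0 (hrun ⟨0, Nat.succ_pos _⟩)
      · exact hl
      · intro t
        exact hrun t.succ

lemma hom_iff_run (A : Str σ ar) (w : List (Sig2 σ ar)) :
    (strBetaStar (PathStr w)).Hom A ↔
      ∃ a : Fin (w.length + 1) → A.V,
        ∀ t : Fin w.length, a t.succ ∈ nstep A (a t.castSucc) (w.get t) := by
  constructor
  · rintro ⟨g, hg⟩
    refine ⟨fun v => g (Quot.mk _ (Sum.inl v)), fun t => ?_⟩
    set s := w.get t with hs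
    have hp : ((t.castSucc : Fin (w.length + 1)), (t.succ : Fin (w.length + 1)))
        ∈ (PathStr w).rel s := ⟨t, rfl, rfl⟩
    have hmem : (fun m => Quot.mk _ (Sum.inr ⟨s, ⟨_, hp⟩, m⟩) :
        Fin (ar s.1) → (strBetaStar (PathStr w)).V) ∈ (strBetaStar (PathStr w)).rel s.1 :=
      ⟨s.2.1, s.2.2, _, hp, rfl⟩
    have hu := hg s.1 _ hmem
    refine ⟨_, hu, ?_, ?_⟩
    · exact congrArg g (Quot.sound (PreRel.left s ⟨_, hp⟩))
    · exact congrArg g (Quot.sound (PreRel.right s ⟨_, hp⟩))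
  · rintro ⟨a, ha⟩
    have H' : ∀ (s : Sig2 σ ar) (p : Fin (w.length+1) × Fin (w.length+1)),
        p ∈ (PathStr w).rel s →
        ∃ u ∈ A.rel s.1, u s.2.1 = a p.1 ∧ u s.2.2 = a p.2 := by
      rintro s p ⟨t, hts, hp⟩
      subst hts; subst hp
      exact ha t
    let h : PlusCarrier (PathStr w) → A.V := fun x =>
      match x with
      | Sum.inl v => a v
      | Sum.inr ⟨s, ⟨p, hp⟩, m⟩ => (H' s p hp).choose m
    have hsound : ∀ x y, PreRel (PathStr w) x y → h x = h y := by
      rintro x y (⟨s, p⟩ | ⟨s, p⟩)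
      · exact (H' s p.1 p.2).choose_spec.2.1
      · exact (H' s p.1 p.2).choose_spec.2.2
    refine ⟨Quot.lift h hsound, ?_⟩
    rintro R τ ⟨i, j, p, hp, rfl⟩
    exact (H' ⟨R, (i, j)⟩ p hp).choose_spec.1

/-- the set of `σ₂`-words describing caterpillars NOT admitting a
homomorphism to `A` is a regular language. -/
theorem stmt_1 (σ : Type) [Finite σ] (ar : σ → ℕ) (A : Str σ ar) :
    Language.IsRegular { w : List (Sig2 σ ar) | ¬ (strBetaStar (PathStr w)).Hom A } := by
  have : Finite A.V := A.finiteV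
  have : Fintype A.V := Fintype.ofFinite _
  refine ⟨Set A.V, inferInstance, dfaOf A, ?_⟩
  ext w
  rw [DFA.mem_accepts]
  show (dfaOf A).evalFrom Set.univ w ∈ _ ↔ _
  rw [evalFrom_eq_run]
  show { b | HasRun A Set.univ w b } = ∅ ↔ ¬ (strBetaStar (PathStr w)).Hom A
  rw [hom_iff_run]
  constructor
  · rintro hempty ⟨a, ha⟩
    have : a (Fin.last _) ∈ (∅ : Set A.V) := by
      rw [← hempty]
      exact ⟨a, Set.mem_univ _, rfl, ha⟩
    exact this
  · intro hno
    ext b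
    simp only [Set.mem_setOf_eq, Set.mem_empty_iff_false, iff_false]
    rintro ⟨a, -, -, ha⟩
    exact hno ⟨a, ha⟩
end

section
/- For every σ₂-structure X and every σ-structure B, there exists a homomorphism of σ₂-structures from X to β(B) if and only if there exists a homomorphism of σ-structures from β*(X) to B (i.e., β* is left adjoint to β). -/
variable {σ : Type} [Finite σ] {ar : σ → ℕ}

/-- `β*` is left adjoint to `β`:
`X → β(B)` iff `β*(X) → B`. -/
theorem stmt_2 (σ : Type) [Finite σ] (ar : σ → ℕ) (X : Str2 σ ar) (B : Str σ ar) :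
    X.Hom (strBeta B) ↔ (strBetaStar X).Hom B := by
  constructor
  · rintro ⟨f, hf⟩
    -- choose witnesses for each edge
    have key : ∀ (s : Sig2 σ ar) (p : { p : X.V × X.V // p ∈ X.rel s }),
        ∃ t ∈ B.rel s.1, t s.2.1 = f p.1.1 ∧ t s.2.2 = f p.1.2 :=
      fun s p => hf s p.1 p.2
    classical
    let ch : ∀ (s : Sig2 σ ar) (p : { p : X.V × X.V // p ∈ X.rel s }),
        Fin (ar s.1) → B.V := fun s p => (key s p).choose
    have chmem : ∀ s p, ch s p ∈ B.rel s.1 := fun s p => (key s p).choose_spec.1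
    have ch1 : ∀ s p, ch s p s.2.1 = f p.1.1 := fun s p => (key s p).choose_spec.2.1
    have ch2 : ∀ s p, ch s p s.2.2 = f p.1.2 := fun s p => (key s p).choose_spec.2.2
    let g0 : PlusCarrier X → B.V := fun u =>
      match u with
      | Sum.inl x => f x
      | Sum.inr ⟨s, p, m⟩ => ch s p m
    have hresp : ∀ a b, PreRel X a b → g0 a = g0 b := by
      rintro a b (⟨s, p⟩ | ⟨s, p⟩)
      · exact ch1 s p
      · exact ch2 s p
    refine ⟨Quot.lift g0 hresp, ?_⟩
    rintro R t ⟨i, j, p, hp, rfl⟩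
    have : (fun m => Quot.lift g0 hresp
        (Quot.mk (PreRel X) (Sum.inr ⟨⟨R, (i, j)⟩, ⟨p, hp⟩, m⟩)))
        = ch ⟨R, (i, j)⟩ ⟨p, hp⟩ := rfl
    rw [this]
    exact chmem ⟨R, (i, j)⟩ ⟨p, hp⟩
  · rintro ⟨g, hg⟩
    refine ⟨fun x => g (Quot.mk (PreRel X) (Sum.inl x)), ?_⟩
    rintro ⟨R, i, j⟩ ⟨x, y⟩ hp
    have ht : (fun m => Quot.mk (PreRel X)
        (Sum.inr ⟨⟨R, (i, j)⟩, ⟨(x, y), hp⟩, m⟩)) ∈ (strBetaStar X).rel R :=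
      ⟨i, j, (x, y), hp, rfl⟩
    have hmem := hg R _ ht
    refine ⟨_, hmem, ?_, ?_⟩
    · exact congrArg g (Quot.sound (PreRel.left ⟨R, (i, j)⟩ ⟨(x, y), hp⟩))
    · exact congrArg g (Quot.sound (PreRel.right ⟨R, (i, j)⟩ ⟨(x, y), hp⟩))
end

section
/- Let A be a σ-structure and regard β(A), with all states both initial and terminal, as a nondeterministic automaton over the alphabet σ₂. Then a word w ∈ σ₂* is accepted by this automaton if and only if the σ-structure β*(P_w) described by w admits a homomorphism to A. -/
variable {σ : Type} [Finite σ] {ar : σ → ℕ}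

/-! With every state initial and terminal, acceptance of `w` by `β(A)` is just a homomorphism
`P_w → β(A)`, and `β*` is left adjoint to `β`. -/

theorem nAccepts_univ_univ_iff {σ : Type} {ar : σ → ℕ} (X : Str2 σ ar) (w : List (Sig2 σ ar)) :
    NAccepts X Set.univ Set.univ w ↔ (PathStr w).Hom X := by
  simp only [NAccepts, Str2.Hom, Set.mem_univ, and_true]
  rfl

theorem Str.Hom.toStrBeta_of_strBetaStar {X : Str2 σ ar} {A : Str σ ar}
    (h : (strBetaStar X).Hom A) : X.Hom (strBeta A) := by
  obtain ⟨g, hg⟩ := h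
  refine ⟨fun x => g (Quot.mk _ (Sum.inl x)), fun s p hp => ?_⟩
  have hblock : (fun m => Quot.mk (PreRel X) (Sum.inr ⟨s, ⟨p, hp⟩, m⟩))
      ∈ (strBetaStar X).rel s.1 := ⟨s.2.1, s.2.2, p, hp, rfl⟩
  exact ⟨_, hg s.1 _ hblock, congrArg g (Quot.sound (PreRel.left s ⟨p, hp⟩)),
    congrArg g (Quot.sound (PreRel.right s ⟨p, hp⟩))⟩

/-- Each edge of `X` lands in `β(A)` through some tuple of `A`; a choice of such tuples defines
the map on the fresh elements of `β*(X)`. -/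
theorem Str2.Hom.strBetaStar {X : Str2 σ ar} {A : Str σ ar}
    (h : X.Hom (strBeta A)) : (strBetaStar X).Hom A := by
  obtain ⟨f, hf⟩ := h
  choose tuple htuple htuple_fst htuple_snd using
    fun (s : Sig2 σ ar) (p : { p : X.V × X.V // p ∈ X.rel s }) => hf s p.1 p.2
  let g : PlusCarrier X → A.V
    | Sum.inl x => f x
    | Sum.inr ⟨s, p, m⟩ => tuple s p m
  have hg : ∀ a b, PreRel X a b → g a = g b
    | _, _, .left s p => htuple_fst s p
    | _, _, .right s p => htuple_snd s p
  refine ⟨Quot.lift g hg, ?_⟩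
  rintro R _ ⟨i, j, p, hp, rfl⟩
  exact htuple ⟨R, (i, j)⟩ ⟨p, hp⟩

theorem strBetaStar_hom_iff (X : Str2 σ ar) (A : Str σ ar) :
    (strBetaStar X).Hom A ↔ X.Hom (strBeta A) :=
  ⟨Str.Hom.toStrBeta_of_strBetaStar, Str2.Hom.strBetaStar⟩

/-- `β(A)`, with all states initial and terminal, accepts `w` iff the
caterpillar `β*(P_w)` described by `w` admits a homomorphism to `A`. -/
theorem stmt_3 (σ : Type) [Finite σ] (ar : σ → ℕ) (A : Str σ ar) (w : List (Sig2 σ ar)) :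
    NAccepts (strBeta A) Set.univ Set.univ w ↔ (strBetaStar (PathStr w)).Hom A :=
  (nAccepts_univ_univ_iff _ w).trans (strBetaStar_hom_iff _ A).symm
end

section
/- Let (D, {q₀}, T) be a deterministic automaton over σ₂ recognizing a language L, and let A = Γ(D, {q₀}, T) be the σ-structure whose universe is the set of subsets of V(D) containing q₀ and disjoint from T, with (X₁,…,X_k) ∈ R(A) whenever for all (i,j) ∈ {1,…,k}² and all a ∈ X_i, the unique b with (a,b) ∈ R^(i,j)(D) lies in X_j. If B is a σ-structure such that no caterpillar described by a word of L admits a homomorphism to B, then B admits a homomorphism to A. -/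
variable {σ : Type} [Finite σ] {ar : σ → ℕ}

section Aux

variable {σ : Type} [Finite σ] {ar : σ → ℕ}

/-- Auxiliary: a word `w`, a labeling `c` of its path by elements of `B`, and a run `r`
of `D` on `w` starting at `q0` and ending at `a`, such that `c` extends to a homomorphism
from the caterpillar of `w` to `B` and the last label is `b`. -/
def GoodData (D : Str2 σ ar) (q0 : D.V) (B : Str σ ar)
    (w : List (Sig2 σ ar)) (b : B.V) (a : D.V) : Prop :=
  ∃ (c : ℕ → B.V) (r : ℕ → D.V),
    r 0 = q0 ∧ r w.length = a ∧ c w.length = b ∧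
    ∀ (t : ℕ) (ht : t < w.length),
      ((r t, r (t+1)) ∈ D.rel (w[t]'ht)) ∧
      ∃ τ : Fin (ar ((w[t]'ht).1)) → B.V,
        τ ∈ B.rel ((w[t]'ht).1) ∧ τ (w[t]'ht).2.1 = c t ∧ τ (w[t]'ht).2.2 = c (t+1)

lemma goodData_nil (D : Str2 σ ar) (q0 : D.V) (B : Str σ ar) (b : B.V) :
    GoodData D q0 B [] b q0 :=
  ⟨fun _ => b, fun _ => q0, rfl, rfl, rfl, fun t ht => absurd ht (Nat.not_lt_zero t)⟩

lemma goodData_step (D : Str2 σ ar) (q0 : D.V) (B : Str σ ar)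
    {w : List (Sig2 σ ar)} {x : B.V} {a : D.V}
    (h : GoodData D q0 B w x a) {R : σ} {i j : Fin (ar R)} {b : D.V}
    (hab : (a, b) ∈ D.rel ⟨R, (i, j)⟩) {τ : Fin (ar R) → B.V}
    (hτ : τ ∈ B.rel R) (hτi : τ i = x) :
    GoodData D q0 B (w ++ [⟨R, (i, j)⟩]) (τ j) b := by
  obtain ⟨c, r, hr0, hrl, hcl, hgood⟩ := h
  refine ⟨fun n => if n = w.length + 1 then τ j else c n,
          fun n => if n = w.length + 1 then b else r n, ?_, ?_, ?_, ?_⟩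
  · simp [hr0]
  · simp [List.length_append]
  · simp [List.length_append]
  · intro t ht
    rw [List.length_append, List.length_singleton] at ht
    rcases Nat.lt_succ_iff_lt_or_eq.mp ht with ht' | ht'
    · have h1 : t ≠ w.length + 1 := by omega
      have h2 : t + 1 ≠ w.length + 1 := by omega
      have hg := hgood t ht'
      have hge : (w ++ [(⟨R, (i, j)⟩ : Sig2 σ ar)])[t]'(by
          rw [List.length_append, List.length_singleton]; omega) = w[t]'ht' :=
        List.getElem_append_left ht'
      rw [hge]
      simp only [if_neg h1, if_neg h2]
      exact hg
    · subst ht'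
      have hge : (w ++ [(⟨R, (i, j)⟩ : Sig2 σ ar)])[w.length]'(by
          rw [List.length_append, List.length_singleton]; omega) = ⟨R, (i, j)⟩ := by
        simp
      have h1 : w.length ≠ w.length + 1 := by omega
      rw [hge]
      simp only [if_neg h1, if_pos rfl]
      refine ⟨by rw [hrl]; exact hab, τ, hτ, ?_, rfl⟩
      simpa [hcl] using hτi

lemma goodData_hom (D : Str2 σ ar) (q0 : D.V) (B : Str σ ar)
    {w : List (Sig2 σ ar)} {b : B.V} {a : D.V}
    (h : GoodData D q0 B w b a) : (strBetaStar (PathStr w)).Hom B := by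
  classical
  obtain ⟨c, r, hr0, hrl, hcl, hgood⟩ := h
  have key : ∀ (s : Sig2 σ ar) (p : (PathStr w).V × (PathStr w).V),
      p ∈ (PathStr w).rel s →
      ∃ τ ∈ B.rel s.1, τ s.2.1 = c p.1.val ∧ τ s.2.2 = c p.2.val := by
    rintro s p ⟨t, hts, hpe⟩
    subst hpe
    rw [List.get_eq_getElem] at hts
    subst hts
    obtain ⟨_, τ, hτ, hτ1, hτ2⟩ := hgood t.val t.isLt
    exact ⟨τ, hτ, hτ1, hτ2⟩
  let g : PlusCarrier (PathStr w) → B.V := fun x =>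
    match x with
    | Sum.inl v => c v.val
    | Sum.inr ⟨s, pm⟩ => (key s pm.1.1 pm.1.2).choose pm.2
  have hresp : ∀ x y, PreRel (PathStr w) x y → g x = g y := by
    intro x y hxy
    cases hxy with
    | left s p => exact (key s p.1 p.2).choose_spec.2.1
    | right s p => exact (key s p.1 p.2).choose_spec.2.2
  refine ⟨Quot.lift g hresp, ?_⟩
  rintro R t ⟨i, j, p, hp, rfl⟩
  exact (key ⟨R, (i, j)⟩ p hp).choose_spec.1

lemma goodData_accepts (D : Str2 σ ar) (q0 : D.V) (T : Set D.V) (B : Str σ ar)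
    {w : List (Sig2 σ ar)} {b : B.V} {a : D.V}
    (h : GoodData D q0 B w b a) (haT : a ∈ T) : NAccepts D {q0} T w := by
  obtain ⟨c, r, hr0, hrl, hcl, hgood⟩ := h
  refine ⟨fun i => r i.val, ?_, by simpa using hr0, by simpa [Fin.last] using hrl ▸ haT⟩
  rintro s p ⟨t, hts, hpe⟩
  subst hpe
  rw [List.get_eq_getElem] at hts
  subst hts
  exact (hgood t.val t.isLt).1

end Aux

/-- if `(D, {q₀}, T)` is a deterministic automaton recognizing `L` and no
caterpillar described by a word of `L` admits a homomorphism to `B`, then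
`B` admits a homomorphism to `Γ(D, {q₀}, T)`. -/
theorem stmt_6 (σ : Type) [Finite σ] (ar : σ → ℕ) (D : Str2 σ ar) (q0 : D.V) (T : Set D.V)
    (hdet : ∀ (a : D.V) (s : Sig2 σ ar), ∃! b : D.V, (a, b) ∈ D.rel s)
    (L : Language (Sig2 σ ar)) (hL : ∀ w : List (Sig2 σ ar), w ∈ L ↔ NAccepts D {q0} T w)
    (B : Str σ ar) (hB : ∀ w ∈ L, ¬ (strBetaStar (PathStr w)).Hom B) :
    B.Hom (GammaStr D q0 T) := by
  classical
  refine ⟨fun b => ⟨{a | ∃ w, GoodData D q0 B w b a}, ⟨[], goodData_nil D q0 B b⟩, ?_⟩, ?_⟩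
  · rintro a ⟨w, hg⟩ haT
    exact hB w ((hL w).mpr (goodData_accepts D q0 T B hg haT)) (goodData_hom D q0 B hg)
  · rintro R t ht i j a ⟨w, hg⟩ b hab
    exact ⟨w ++ [⟨R, (i, j)⟩], goodData_step D q0 B hg hab ht rfl⟩
end

section
/- Let (D, {q₀}, T) be a deterministic automaton over σ₂ recognizing a language L, and let A = Γ(D, {q₀}, T) be the σ-structure whose universe is the set of subsets of V(D) containing q₀ and disjoint from T, with (X₁,…,X_k) ∈ R(A) whenever for all (i,j) ∈ {1,…,k}² and all a ∈ X_i, the unique b with (a,b) ∈ R^(i,j)(D) lies in X_j. Then for every word w ∈ L, the caterpillar β*(P_w) described by w admits no homomorphism to A. -/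
variable {σ : Type} [Finite σ] {ar : σ → ℕ}

/-- The unit `X → β(β* X)` of the adjunction `β* ⊣ β`. -/
def strBetaStarUnit (X : Str2 σ ar) (x : X.V) : (strBetaStar X).V :=
  Quot.mk _ (Sum.inl x)

theorem strBetaStarUnit_mem_rel {X : Str2 σ ar} {s : Sig2 σ ar} {p : X.V × X.V}
    (hp : p ∈ X.rel s) :
    (strBetaStarUnit X p.1, strBetaStarUnit X p.2) ∈ (strBeta (strBetaStar X)).rel s :=
  ⟨fun m => Quot.mk _ (Sum.inr ⟨s, ⟨p, hp⟩, m⟩), ⟨s.2.1, s.2.2, p, hp, rfl⟩,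
    Quot.sound (PreRel.left s ⟨p, hp⟩), Quot.sound (PreRel.right s ⟨p, hp⟩)⟩

theorem strBeta_map_mem_rel {σ : Type} {ar : σ → ℕ} {A B : Str σ ar} {g : A.V → B.V}
    (hg : ∀ (R : σ) (t : Fin (ar R) → A.V), t ∈ A.rel R → (fun i => g (t i)) ∈ B.rel R)
    {s : Sig2 σ ar} {p : A.V × A.V} (hp : p ∈ (strBeta A).rel s) :
    (g p.1, g p.2) ∈ (strBeta B).rel s := by
  obtain ⟨t, ht, h₁, h₂⟩ := hp
  exact ⟨fun i => g (t i), hg s.1 t ht, congrArg g h₁, congrArg g h₂⟩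

theorem Str2.hom_strBeta_of_strBetaStar_hom {X : Str2 σ ar} {B : Str σ ar}
    (h : (strBetaStar X).Hom B) : X.Hom (strBeta B) := by
  obtain ⟨g, hg⟩ := h
  exact ⟨g ∘ strBetaStarUnit X, fun _ _ hp => strBeta_map_mem_rel hg (strBetaStarUnit_mem_rel hp)⟩

theorem GammaStr.mem_of_mem_strBeta_rel {σ : Type} {ar : σ → ℕ}
    {D : Str2 σ ar} {q0 : D.V} {T : Set D.V} {s : Sig2 σ ar}
    {Y Z : (GammaStr D q0 T).V} (hYZ : (Y, Z) ∈ (strBeta (GammaStr D q0 T)).rel s)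
    {a b : D.V} (ha : a ∈ Y.1) (hab : (a, b) ∈ D.rel s) : b ∈ Z.1 := by
  obtain ⟨t, ht, rfl, rfl⟩ := hYZ
  exact ht s.2.1 s.2.2 a ha b hab

theorem run_mem_of_hom_strBeta_GammaStr {σ : Type} {ar : σ → ℕ}
    {D : Str2 σ ar} {q0 : D.V} {T : Set D.V} {w : List (Sig2 σ ar)} {f : Fin (w.length + 1) → D.V}
    (hrun : ∀ (s : Sig2 σ ar) (p : Fin (w.length + 1) × Fin (w.length + 1)),
      p ∈ (PathStr w).rel s → (f p.1, f p.2) ∈ D.rel s)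
    (hf0 : f 0 = q0) {h : Fin (w.length + 1) → (GammaStr D q0 T).V}
    (hh : ∀ (s : Sig2 σ ar) (p : Fin (w.length + 1) × Fin (w.length + 1)),
      p ∈ (PathStr w).rel s → (h p.1, h p.2) ∈ (strBeta (GammaStr D q0 T)).rel s) :
    ∀ t, f t ∈ (h t).1 := by
  intro t
  induction t using Fin.induction with
  | zero => exact hf0 ▸ (h 0).2.1
  | succ t ih =>
    have hedge : (t.castSucc, t.succ) ∈ (PathStr w).rel (w.get t) := ⟨t, rfl, rfl⟩
    exact GammaStr.mem_of_mem_strBeta_rel (hh _ _ hedge) ih (hrun _ _ hedge)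

theorem not_hom_strBeta_GammaStr_of_NAccepts {σ : Type} {ar : σ → ℕ}
    {D : Str2 σ ar} {q0 : D.V} {T : Set D.V} {w : List (Sig2 σ ar)} (hw : NAccepts D {q0} T w) :
    ¬ (PathStr w).Hom (strBeta (GammaStr D q0 T)) := by
  rintro ⟨h, hh⟩
  obtain ⟨f, hrun, hf0, hfT⟩ := hw
  exact (h (Fin.last _)).2.2 _ (run_mem_of_hom_strBeta_GammaStr hrun hf0 hh _) hfT

theorem stmt_7_general (σ : Type) [Finite σ] (ar : σ → ℕ) (D : Str2 σ ar) (q0 : D.V) (T : Set D.V)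
    (L : Language (Sig2 σ ar)) (hL : ∀ w : List (Sig2 σ ar), w ∈ L ↔ NAccepts D {q0} T w) :
    ∀ w ∈ L, ¬ (strBetaStar (PathStr w)).Hom (GammaStr D q0 T) :=
  fun w hw hhom => not_hom_strBeta_GammaStr_of_NAccepts ((hL w).1 hw)
    (Str2.hom_strBeta_of_strBetaStar_hom hhom)

/-- if `(D, {q₀}, T)` is a deterministic automaton recognizing `L`, then no
caterpillar described by a word of `L` admits a homomorphism to `Γ(D, {q₀}, T)`. -/
theorem stmt_7 (σ : Type) [Finite σ] (ar : σ → ℕ) (D : Str2 σ ar) (q0 : D.V) (T : Set D.V)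
    (hdet : ∀ (a : D.V) (s : Sig2 σ ar), ∃! b : D.V, (a, b) ∈ D.rel s)
    (L : Language (Sig2 σ ar)) (hL : ∀ w : List (Sig2 σ ar), w ∈ L ↔ NAccepts D {q0} T w) :
    ∀ w ∈ L, ¬ (strBetaStar (PathStr w)).Hom (GammaStr D q0 T) :=
  stmt_7_general σ ar D q0 T L hL
end

section
/- For every caterpillar Datalog program P over a type σ, there exists a σ-structure A such that for every σ-structure B: B admits a homomorphism to A if and only if P does not achieve its goal on B. -/
variable {σ : Type} [Finite σ] {ar : σ → ℕ}

/-- A caterpillar Datalog program: monadic linear Datalog with at most one EDB per rule.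
A rule `(ρᵢ, ρⱼ, ⟨R, (m, n)⟩)` reads: `a ∈ ρᵢ ← b ∈ ρⱼ and (x₁,…,x_k) ∈ R with x_m = a, x_n = b`. -/
structure CatProgram (σ : Type) (ar : σ → ℕ) : Type 1 where
  IDB : Type
  finIDB : Finite IDB
  init : IDB
  rules : Set (IDB × IDB × Sig2 σ ar)
  goals : Set IDB

variable {σ : Type} [Finite σ] {ar : σ → ℕ}

/-- The least interpretation of the IDBs on an input structure `B`:
`Derives P B ρ a` means `a ∈ ρ` is derivable. -/
inductive Derives (P : CatProgram σ ar) (B : Str σ ar) : P.IDB → B.V → Prop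
  | init (b : B.V) : Derives P B P.init b
  | step (ρi ρj : P.IDB) (R : σ) (m n : Fin (ar R)) (t : Fin (ar R) → B.V) :
      (ρi, ρj, ⟨R, (m, n)⟩) ∈ P.rules → t ∈ B.rel R → Derives P B ρj (t n) →
      Derives P B ρi (t m)

/-- The program achieves its goal on `B` when the body IDB of some goal rule is nonempty. -/
def AchievesGoal (P : CatProgram σ ar) (B : Str σ ar) : Prop :=
  ∃ ρ ∈ P.goals, ∃ a : B.V, Derives P B ρ a

/-- The nondeterministic automaton of a caterpillar Datalog program: states are the IDBs,
with a transition `(ρⱼ, ρᵢ) ∈ R^(n,m)` for each rule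
`a ∈ ρᵢ ← b ∈ ρⱼ and (x₁,…,x_k) ∈ R with x_m = a, x_n = b`. -/
def progAut (P : CatProgram σ ar) : Str2 σ ar where
  V := P.IDB
  finiteV := P.finIDB
  rel := fun s => { p | (p.2, p.1, ⟨s.1, (s.2.2, s.2.1)⟩) ∈ P.rules }

/-- for every caterpillar Datalog program `P` there is a structure `A` such
that `B → A` iff `P` does not achieve its goal on `B`. -/
theorem stmt_10 (σ : Type) [Finite σ] (ar : σ → ℕ) (P : CatProgram σ ar) :
    ∃ A : Str σ ar, ∀ B : Str σ ar, B.Hom A ↔ ¬ AchievesGoal P B := by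
  have : Finite P.IDB := P.finIDB
  refine ⟨{ V := { X : Set P.IDB // P.init ∈ X ∧ ∀ ρ ∈ X, ρ ∉ P.goals }
            finiteV := inferInstance
            rel := fun R => { t | ∀ (m n : Fin (ar R)) (ρi ρj : P.IDB),
              (ρi, ρj, ⟨R, (m, n)⟩) ∈ P.rules → ρj ∈ (t n).1 → ρi ∈ (t m).1 } }, ?_⟩
  intro B
  constructor
  · rintro ⟨f, hf⟩ ⟨ρ, hρ, a, hd⟩
    have key : ∀ (ρ' : P.IDB) (b : B.V), Derives P B ρ' b → ρ' ∈ (f b).1 := by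
      intro ρ' b hd
      induction hd with
      | init b => exact (f b).2.1
      | step ρi ρj R m n t hr ht _ ih => exact hf R t ht m n ρi ρj hr ih
    exact (f a).2.2 ρ (key ρ a hd) hρ
  · intro hng
    refine ⟨fun b => ⟨{ ρ' | Derives P B ρ' b }, Derives.init b,
      fun ρ' hρ' hg => hng ⟨ρ', hg, b, hρ'⟩⟩, ?_⟩
    intro R t ht m n ρi ρj hr hj
    exact Derives.step ρi ρj R m n t hr ht hj
end
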